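/- arXiv:2102.07773 — 2 statements merged into one kernel-verified Lean document; each statement's English description precedes it below -/
import Mathlib

section
/- For any Hermitian operator X with Tr X = 1, the generalized robustness r(X) := min{ λ ≥ 0 : (X + λω)/(1+λ) is a density operator for some density operator ω } satisfies 2 r(X) + 1 = ‖X‖₁. -/
open Matrix Kronecker ComplexOrder

/-- Singular values of a square complex matrix. -/
noncomputable def singVals {n : Type*} [Fintype n] [DecidableEq n]
    (X : Matrix n n ℂ) : n → ℝ :=
  fun i => Real.sqrt ((Matrix.isHermitian_mul_conjTranspose_self X).eigenvalues i)

/-- Trace norm (Schatten 1-norm): sum of singular values; for Hermitian `X` this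
is the sum of the absolute values of the eigenvalues. -/
noncomputable def traceNorm {n : Type*} [Fintype n] [DecidableEq n]
    (X : Matrix n n ℂ) : ℝ :=
  ∑ i, singVals X i

/-- Operator norm (Schatten ∞-norm): largest singular value. -/
noncomputable def opNorm {n : Type*} [Fintype n] [DecidableEq n]
    (X : Matrix n n ℂ) : ℝ :=
  ⨆ i, singVals X i

/-- A density operator: positive semidefinite with unit trace. -/
def Density {n : Type*} [Fintype n] (ρ : Matrix n n ℂ) : Prop :=
  ρ.PosSemidef ∧ ρ.trace = 1

/-- Loewner order: `X ⊑ Y` iff `Y - X` is positive semidefinite. -/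
def Loewner {n : Type*} [Fintype n] (X Y : Matrix n n ℂ) : Prop :=
  (Y - X).PosSemidef

/-- Partial trace over the second (B) factor. -/
noncomputable def ptraceB {a b : Type*} [Fintype b] (M : Matrix (a × b) (a × b) ℂ) :
    Matrix a a ℂ :=
  Matrix.of fun i j => ∑ k, M (i, k) (j, k)

/-- Choi matrix of a linear map on matrices. -/
noncomputable def choi {da db : ℕ}
    (Φ : Matrix (Fin da) (Fin da) ℂ →ₗ[ℂ] Matrix (Fin db) (Fin db) ℂ) :
    Matrix (Fin da × Fin db) (Fin da × Fin db) ℂ :=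
  Matrix.of fun p q => Φ (Matrix.single p.1 q.1 1) p.2 q.2

/-- Completely positive and trace non-increasing, via the Choi matrix. -/
def IsCPTNI {da db : ℕ}
    (Φ : Matrix (Fin da) (Fin da) ℂ →ₗ[ℂ] Matrix (Fin db) (Fin db) ℂ) : Prop :=
  (choi Φ).PosSemidef ∧ Loewner (ptraceB (choi Φ)) 1

/-- Completely positive and trace preserving, via the Choi matrix. -/
def IsCPTP {da db : ℕ}
    (Φ : Matrix (Fin da) (Fin da) ℂ →ₗ[ℂ] Matrix (Fin db) (Fin db) ℂ) : Prop :=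
  (choi Φ).PosSemidef ∧ ptraceB (choi Φ) = 1

/-- The map `id_A ⊗ Φ` acting on operators on `A ⊗ A`. -/
noncomputable def idTensor {da db : ℕ}
    (Φ : Matrix (Fin da) (Fin da) ℂ →ₗ[ℂ] Matrix (Fin db) (Fin db) ℂ)
    (M : Matrix (Fin da × Fin da) (Fin da × Fin da) ℂ) :
    Matrix (Fin da × Fin db) (Fin da × Fin db) ℂ :=
  Matrix.of fun p q => Φ (Matrix.of fun k l => M (p.1, k) (q.1, l)) p.2 q.2

/-- Diamond norm: `max_ρ ‖(id ⊗ Φ)(ρ)‖₁` over bipartite density operators. -/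
noncomputable def diamondNorm {da db : ℕ}
    (Φ : Matrix (Fin da) (Fin da) ℂ →ₗ[ℂ] Matrix (Fin db) (Fin db) ℂ) : ℝ :=
  sSup {x : ℝ | ∃ ρ : Matrix (Fin da × Fin da) (Fin da × Fin da) ℂ,
    Density ρ ∧ x = traceNorm (idTensor Φ ρ)}

/-- Base norm with respect to CPTNI maps. -/
noncomputable def cptniNorm {da db : ℕ}
    (Φ : Matrix (Fin da) (Fin da) ℂ →ₗ[ℂ] Matrix (Fin db) (Fin db) ℂ) : ℝ :=
  sInf {s : ℝ | ∃ lp lm : ℝ, ∃ Λp Λm :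
      Matrix (Fin da) (Fin da) ℂ →ₗ[ℂ] Matrix (Fin db) (Fin db) ℂ,
    0 ≤ lp ∧ 0 ≤ lm ∧ IsCPTNI Λp ∧ IsCPTNI Λm ∧
    Φ = (lp : ℂ) • Λp - (lm : ℂ) • Λm ∧ s = lp + lm}

/-- Generalised robustness of a Hermitian unit-trace operator with respect to
all density operators. -/
noncomputable def genRobustness {n : ℕ} (X : Matrix (Fin n) (Fin n) ℂ) : ℝ :=
  sInf {l : ℝ | 0 ≤ l ∧ ∃ ω : Matrix (Fin n) (Fin n) ℂ, Density ω ∧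
    Density ((1 / (1 + l)) • (X + l • ω))}

/-! In an eigenbasis of `X`, with eigenvalues `λᵢ`, positivity of `X + l • ω` forces
`λᵢ + l ωᵢᵢ ≥ 0`, hence `∑ λᵢ⁻ ≤ l Tr ω = l`. Conversely `ω = X⁻ / Tr X⁻` attains this bound,
since `X + X⁻ = X⁺ ≥ 0`. So `r(X) = ∑ λᵢ⁻`, while `‖X‖₁ = ∑ |λᵢ| = ∑ λᵢ + 2 ∑ λᵢ⁻ = 1 + 2 r(X)`. -/

open scoped MatrixOrder

namespace Matrix

variable {𝕜 m : Type*} [RCLike 𝕜] [Fintype m] [DecidableEq m]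

lemma IsHermitian.trace_cfc {A : Matrix m m 𝕜} (hA : A.IsHermitian) (f : ℝ → ℝ) :
    (cfc f A).trace = ∑ i, (f (hA.eigenvalues i) : 𝕜) := by
  rw [hA.cfc_eq, IsHermitian.cfc, Unitary.conjStarAlgAut_apply, trace_mul_cycle,
    Unitary.coe_star_mul_self, one_mul, trace_diagonal]
  rfl

lemma posSemidef_cfc (A : Matrix m m 𝕜) {f : ℝ → ℝ} (hf : ∀ x, 0 ≤ f x) :
    (cfc f A).PosSemidef :=
  nonneg_iff_posSemidef.mp (cfc_nonneg fun x _ => hf x)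

lemma IsHermitian.add_cfc_negPart {A : Matrix m m 𝕜} (hA : A.IsHermitian) :
    A + cfc (fun x : ℝ => x⁻) A = cfc (fun x : ℝ => x⁺) A :=
  calc A + cfc (fun x : ℝ => x⁻) A = cfc (fun x : ℝ => x + x⁻) A := by
        rw [cfc_add .., cfc_id' ℝ A]
    _ = cfc (fun x : ℝ => x⁺) A := cfc_congr fun x _ => by linarith [posPart_sub_negPart x]

lemma IsHermitian.sum_negPart_eigenvalues_le {A B : Matrix m m 𝕜} (hA : A.IsHermitian)
    (hB : B.PosSemidef) (hAB : (A + B).PosSemidef) :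
    ∑ i, (hA.eigenvalues i)⁻ ≤ RCLike.re B.trace := by
  set U : Matrix m m 𝕜 := (hA.eigenvectorUnitary : Matrix m m 𝕜)
  have hdiag : Uᴴ * A * U = diagonal (RCLike.ofReal ∘ hA.eigenvalues) := by
    simpa [U, Unitary.conjStarAlgAut_star_apply, star_eq_conjTranspose] using
      hA.conjStarAlgAut_star_eigenvectorUnitary
  have hC : (Uᴴ * B * U).PosSemidef := hB.conjTranspose_mul_mul_same U
  have hsum := hAB.conjTranspose_mul_mul_same U
  rw [mul_add, add_mul, hdiag] at hsum
  have htrace : (Uᴴ * B * U).trace = B.trace := by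
    rw [trace_mul_cycle, ← star_eq_conjTranspose,
      mem_unitaryGroup_iff.mp hA.eigenvectorUnitary.2, one_mul]
  rw [← htrace, trace, map_sum]
  refine Finset.sum_le_sum fun i _ => sup_le ?_ (RCLike.nonneg_iff.mp hC.diag_nonneg).1
  have hi := (RCLike.nonneg_iff.mp (hsum.diag_nonneg (i := i))).1
  simp only [add_apply, diagonal_apply_eq, Function.comp_apply, map_add, RCLike.ofReal_re] at hi
  rw [diag_apply]
  linarith

end Matrix

lemma density_smul_add_iff {m : Type*} [Fintype m] {X ω : Matrix m m ℂ} (hX : X.trace = 1)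
    (hω : ω.trace = 1) {l : ℝ} (hl : 0 ≤ l) :
    Density ((1 / (1 + l)) • (X + l • ω)) ↔ (X + l • ω).PosSemidef := by
  have hl' : 0 < 1 + l := by linarith
  have htrace : ((1 / (1 + l)) • (X + l • ω)).trace = 1 := by
    rw [trace_smul, trace_add, trace_smul, hX, hω, Complex.real_smul, Complex.real_smul]
    push_cast
    field_simp
  refine ⟨fun h => ?_, fun h => ⟨h.smul (by positivity), htrace⟩⟩
  simpa [smul_smul, hl'.ne'] using h.1.smul hl'.le

variable {m : Type*} [Fintype m] [DecidableEq m]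

lemma traceNorm_eq_trace_abs_conjTranspose (X : Matrix m m ℂ) :
    (traceNorm X : ℂ) = (CFC.abs Xᴴ).trace := by
  have hP := posSemidef_self_mul_conjTranspose X
  rw [CFC.abs, star_eq_conjTranspose, conjTranspose_conjTranspose,
    CFC.sqrt_eq_real_sqrt _ hP.nonneg, cfcₙ_eq_cfc, hP.isHermitian.trace_cfc, traceNorm]
  push_cast
  rfl

lemma Matrix.IsHermitian.traceNorm_eq_sum_abs_eigenvalues {X : Matrix m m ℂ}
    (hX : X.IsHermitian) : traceNorm X = ∑ i, |hX.eigenvalues i| := by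
  have h := traceNorm_eq_trace_abs_conjTranspose X
  rw [hX.eq, CFC.abs_eq_cfc_norm X hX.isSelfAdjoint, hX.trace_cfc] at h
  simp only [Real.norm_eq_abs, ← RCLike.ofReal_sum] at h
  exact Complex.ofReal_injective h

lemma Matrix.IsHermitian.sum_negPart_eigenvalues_le_of_density {X ω : Matrix m m ℂ}
    (hX : X.IsHermitian) (hω : Density ω) {l : ℝ} (hl : 0 ≤ l) (h : (X + l • ω).PosSemidef) :
    ∑ i, (hX.eigenvalues i)⁻ ≤ l := by
  have := hX.sum_negPart_eigenvalues_le (hω.1.smul hl) h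
  rwa [trace_smul, hω.2, Complex.real_smul, mul_one, RCLike.re_to_complex,
    Complex.ofReal_re] at this

lemma Matrix.IsHermitian.exists_density_posSemidef_add_smul {X : Matrix m m ℂ}
    (hX : X.IsHermitian) (htr : X.trace = 1) :
    ∃ ω, Density ω ∧ (X + (∑ i, (hX.eigenvalues i)⁻) • ω).PosSemidef := by
  set N := ∑ i, (hX.eigenvalues i)⁻
  set P := cfc (fun x : ℝ => x⁻) X
  have hP : P.PosSemidef := posSemidef_cfc X negPart_nonneg
  have hXP : (X + P).PosSemidef := by
    rw [hX.add_cfc_negPart]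
    exact posSemidef_cfc X posPart_nonneg
  have htrP : P.trace = N := by
    rw [hX.trace_cfc, ← RCLike.ofReal_sum]
    rfl
  rcases eq_or_ne N 0 with hN | hN
  · have hP0 : P = 0 := hP.trace_eq_zero_iff.mp (by rw [htrP, hN, Complex.ofReal_zero])
    refine ⟨X, ⟨?_, htr⟩, ?_⟩ <;> simpa [hN, hP0] using hXP
  · refine ⟨N⁻¹ • P, ⟨hP.smul (by positivity), ?_⟩, ?_⟩
    · rw [trace_smul, htrP, Complex.real_smul, ← Complex.ofReal_mul, inv_mul_cancel₀ hN,
        Complex.ofReal_one]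
    · rwa [smul_smul, mul_inv_cancel₀ hN, one_smul]

theorem genRobustness_eq_sum_negPart_eigenvalues {n : ℕ} {X : Matrix (Fin n) (Fin n) ℂ}
    (hX : X.IsHermitian) (htr : X.trace = 1) :
    genRobustness X = ∑ i, (hX.eigenvalues i)⁻ := by
  refine IsLeast.csInf_eq ⟨⟨by positivity, ?_⟩, ?_⟩
  · obtain ⟨ω, hω, hpos⟩ := hX.exists_density_posSemidef_add_smul htr
    exact ⟨ω, hω, (density_smul_add_iff htr hω.2 (by positivity)).mpr hpos⟩
  · rintro l ⟨hl, ω, hω, hdens⟩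
    exact hX.sum_negPart_eigenvalues_le_of_density hω hl
      ((density_smul_add_iff htr hω.2 hl).mp hdens)

theorem two_genRobustness_add_one_eq_traceNorm_general {n : ℕ}
    (X : Matrix (Fin n) (Fin n) ℂ) (hX : X.IsHermitian) (htr : X.trace = 1) :
    2 * genRobustness X + 1 = traceNorm X := by
  have hsum : ∑ i, hX.eigenvalues i = 1 := by
    simpa [htr] using (congrArg RCLike.re hX.trace_eq_sum_eigenvalues).symm
  rw [genRobustness_eq_sum_negPart_eigenvalues hX htr, hX.traceNorm_eq_sum_abs_eigenvalues,
    ← hsum, Finset.mul_sum, ← Finset.sum_add_distrib]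
  refine Finset.sum_congr rfl fun i _ => ?_
  linarith [posPart_add_negPart (hX.eigenvalues i), posPart_sub_negPart (hX.eigenvalues i)]

/-- for Hermitian `X` with `Tr X = 1`, `2 r(X) + 1 = ‖X‖₁`. -/
theorem two_genRobustness_add_one_eq_traceNorm {n : ℕ} (hn : 0 < n)
    (X : Matrix (Fin n) (Fin n) ℂ) (hX : X.IsHermitian) (htr : X.trace = 1) :
    2 * genRobustness X + 1 = traceNorm X :=
  two_genRobustness_add_one_eq_traceNorm_general X hX htr
end

section
/- For any Hermiticity-preserving map Φ, the robustness R''(Φ) := min{ λ ≥ 0 : Φ + λΛ completely positive for some CPTP Λ } satisfies (1/d_A) Tr (J_Φ)₋ ≤ R''(Φ) ≤ Tr (J_Φ)₋, where (J_Φ)₋ is the negative part of the Choi matrix. -/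
open Matrix Kronecker ComplexOrder

/-- Robustness `R''`: the least `λ ≥ 0` such that `Φ + λΛ` is completely
positive for some CPTP Λ. -/
noncomputable def robustnessDoublePrime {da db : ℕ} (Φ : Matrix (Fin da) (Fin da) ℂ →ₗ[ℂ] Matrix (Fin db) (Fin db) ℂ) : ℝ :=
  sInf {l : ℝ | 0 ≤ l ∧ ∃ Λ : Matrix (Fin da) (Fin da) ℂ →ₗ[ℂ] Matrix (Fin db) (Fin db) ℂ, IsCPTP Λ ∧
    (choi Φ + l • choi Λ).PosSemidef}

/-! Upper bound: with `t = Tr N` and `τ = 1 / d_B`, the matrix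
`Q = (N + (t • 1 - Tr_B N) ⊗ τ) / t` is the Choi matrix of a channel, since `Tr_B N ≤ t • 1`,
and `J_Φ + t Q = P + (t • 1 - Tr_B N) ⊗ τ ≥ 0`.
Lower bound: if `J_Φ + λ J_Λ ≥ 0`, take the trace against the projection `E` onto the range
of `N`; it kills `P` because `N P = 0`, so `Tr N ≤ λ Tr (E J_Λ) ≤ λ Tr J_Λ = λ d_A`. -/

open scoped MatrixOrder

section PosSemidef

variable {n : Type*} [Fintype n] [DecidableEq n]

lemma Matrix.PosSemidef.trace_mul_nonneg {A B : Matrix n n ℂ} (hA : A.PosSemidef)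
    (hB : B.PosSemidef) : 0 ≤ (A * B).trace := by
  obtain ⟨C, rfl⟩ := CStarAlgebra.nonneg_iff_eq_star_mul_self.mp hA.nonneg
  rw [Matrix.mul_assoc, trace_mul_comm, star_eq_conjTranspose]
  exact (hB.mul_mul_conjTranspose_same C).trace_nonneg

lemma Matrix.PosSemidef.le_trace_re_smul_one {A : Matrix n n ℂ} (hA : A.PosSemidef) :
    A ≤ A.trace.re • 1 := by
  rw [← Algebra.algebraMap_eq_smul_one, le_algebraMap_iff_spectrum_le hA.1,
    hA.1.spectrum_real_eq_range_eigenvalues]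
  rintro _ ⟨i, rfl⟩
  have htr : A.trace.re = ∑ j, hA.1.eigenvalues j := by
    simp [hA.1.trace_eq_sum_eigenvalues]
  rw [htr]
  exact Finset.single_le_sum (fun j _ => hA.eigenvalues_nonneg j) (Finset.mem_univ i)

/-- `E = N⁻¹ N` in the functional calculus is a projection because `0⁻¹ = 0`. -/
lemma Matrix.IsHermitian.exists_support_projection {N : Matrix n n ℂ} (hN : N.IsHermitian) :
    ∃ E : Matrix n n ℂ, 0 ≤ E ∧ E ≤ 1 ∧ E * N = N ∧
      ∀ P : Matrix n n ℂ, N * P = 0 → E * P = 0 := by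
  have hcont (f : ℝ → ℝ) : ContinuousOn f (spectrum ℝ N) :=
    (finite_real_spectrum (A := N)).continuousOn f
  have hE : cfc (fun x : ℝ => x⁻¹ * x) N = cfc (fun x : ℝ => x⁻¹) N * N := by
    rw [cfc_mul _ _ N (hcont _) (hcont _), cfc_id' ℝ N]
  refine ⟨cfc (fun x : ℝ => x⁻¹) N * N, hE ▸ cfc_nonneg fun x _ => ?_,
    hE ▸ cfc_le_one _ N fun x _ => ?_, ?_, fun P hP => by rw [Matrix.mul_assoc, hP, Matrix.mul_zero]⟩
  · by_cases hx : x = 0 <;> simp [hx]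
  · by_cases hx : x = 0 <;> simp [hx]
  · calc cfc (fun x : ℝ => x⁻¹) N * N * N = cfc (fun x : ℝ => x⁻¹ * x * x) N := by
          rw [cfc_mul (fun x : ℝ => x⁻¹ * x) (fun x => x) N (hcont _) (hcont _), cfc_id' ℝ N, hE]
      _ = N := by simp only [inv_mul_mul_self]; exact cfc_id' ℝ N

lemma trace_re_le_mul_trace_re_of_posSemidef {P N J : Matrix n n ℂ} (hP : P.IsHermitian)
    (hN : N.IsHermitian) (hPN : P * N = 0) (hJ : J.PosSemidef) {l : ℝ} (hl : 0 ≤ l)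
    (h : (P - N + l • J).PosSemidef) : N.trace.re ≤ l * J.trace.re := by
  obtain ⟨E, hE0, hE1, hEN, hEkill⟩ := hN.exists_support_projection
  have hNP : N * P = 0 := by
    simpa [hP.eq, hN.eq] using congrArg conjTranspose hPN
  have hE : E.PosSemidef := nonneg_iff_posSemidef.mp hE0
  have htest := (hE.trace_mul_nonneg h).1
  have hcompl := ((sub_nonneg.mpr hE1 |> nonneg_iff_posSemidef.mp).trace_mul_nonneg hJ).1
  rw [Matrix.mul_add, Matrix.mul_sub, hEkill P hNP, hEN, mul_smul_comm, trace_add, trace_sub,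
    trace_smul] at htest
  rw [Matrix.sub_mul, Matrix.one_mul, trace_sub] at hcompl
  simp only [Complex.zero_re, Complex.add_re, Complex.sub_re, Complex.real_smul,
    Complex.re_ofReal_mul, trace_zero] at htest hcompl
  nlinarith

end PosSemidef

section PartialTrace

variable {a b : Type*} [Fintype b]

lemma ptraceB_add (M N : Matrix (a × b) (a × b) ℂ) :
    ptraceB (M + N) = ptraceB M + ptraceB N := by
  ext i j
  simp [ptraceB, Finset.sum_add_distrib]

lemma ptraceB_smul {R : Type*} [DistribSMul R ℂ] (c : R) (M : Matrix (a × b) (a × b) ℂ) :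
    ptraceB (c • M) = c • ptraceB M := by
  ext i j
  simp [ptraceB, Finset.smul_sum]

lemma ptraceB_kronecker (A : Matrix a a ℂ) (B : Matrix b b ℂ) :
    ptraceB (A ⊗ₖ B) = B.trace • A := by
  ext i j
  simp [ptraceB, trace, ← Finset.mul_sum, mul_comm]

lemma trace_ptraceB [Fintype a] (M : Matrix (a × b) (a × b) ℂ) : (ptraceB M).trace = M.trace := by
  simp [ptraceB, trace, Fintype.sum_prod_type]

variable [Fintype a] [DecidableEq a] [DecidableEq b]

lemma posSemidef_ptraceB {M : Matrix (a × b) (a × b) ℂ} (hM : M.PosSemidef) :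
    (ptraceB M).PosSemidef := by
  let V (k : b) : Matrix (a × b) a ℂ := Matrix.of fun p j => if p = (j, k) then 1 else 0
  have hsum : ptraceB M = ∑ k, (V k)ᴴ * M * V k := by
    ext i j
    simp [V, ptraceB, Matrix.sum_apply, Matrix.mul_apply]
  rw [hsum]
  exact posSemidef_sum _ fun k _ => hM.conjTranspose_mul_mul_same (V k)

lemma exists_ptraceB_eq_one_le_trace_re_smul [Nonempty b]
    {N : Matrix (a × b) (a × b) ℂ} (hN : N.PosSemidef) :
    ∃ Q : Matrix (a × b) (a × b) ℂ, Q.PosSemidef ∧ ptraceB Q = 1 ∧ N ≤ N.trace.re • Q := by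
  set t := N.trace.re
  let τ : Matrix b b ℂ := (Fintype.card b : ℝ)⁻¹ • 1
  have hτ : τ.PosSemidef := PosSemidef.one.smul (by positivity)
  have hτtr : τ.trace = 1 := by
    simp [τ, trace_smul, Complex.real_smul, Fintype.card_ne_zero]
  have hgap : (t • (1 : Matrix a a ℂ) - ptraceB N).PosSemidef :=
    le_iff.mp <| by simpa [t, trace_ptraceB] using (posSemidef_ptraceB hN).le_trace_re_smul_one
  by_cases ht : t = 0
  · refine ⟨1 ⊗ₖ τ, PosSemidef.one.kronecker hτ, by rw [ptraceB_kronecker, hτtr, one_smul], ?_⟩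
    rw [ht, zero_smul]
    simpa [t, ht] using hN.le_trace_re_smul_one
  refine ⟨t⁻¹ • (N + (t • 1 - ptraceB N) ⊗ₖ τ),
    (hN.add (hgap.kronecker hτ)).smul (inv_nonneg.mpr ?_), ?_, ?_⟩
  · exact (Complex.nonneg_iff.mp hN.trace_nonneg).1
  · rw [ptraceB_smul, ptraceB_add, ptraceB_kronecker, hτtr, one_smul, add_sub_cancel, smul_smul,
      inv_mul_cancel₀ ht, one_smul]
  · rw [smul_smul, mul_inv_cancel₀ ht, one_smul, le_iff, add_sub_cancel_left]
    exact hgap.kronecker hτ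

end PartialTrace

section Robustness

variable {da db : ℕ}

noncomputable def mapOfChoi (Q : Matrix (Fin da × Fin db) (Fin da × Fin db) ℂ) :
    Matrix (Fin da) (Fin da) ℂ →ₗ[ℂ] Matrix (Fin db) (Fin db) ℂ where
  toFun X := Matrix.of fun r s => ∑ p, ∑ q, X p q * Q (p, r) (q, s)
  map_add' X Y := by
    ext r s
    simp [add_mul, Finset.sum_add_distrib]
  map_smul' c X := by
    ext r s
    simp [Finset.mul_sum, mul_assoc]

@[simp]
lemma choi_mapOfChoi (Q : Matrix (Fin da × Fin db) (Fin da × Fin db) ℂ) :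
    choi (mapOfChoi Q) = Q := by
  ext ⟨i, r⟩ ⟨j, s⟩
  simp [choi, mapOfChoi, Matrix.single, ite_and]

lemma isCPTP_mapOfChoi {Q : Matrix (Fin da × Fin db) (Fin da × Fin db) ℂ} (hQ : Q.PosSemidef)
    (hQ1 : ptraceB Q = 1) : IsCPTP (mapOfChoi Q) := by
  simpa [IsCPTP] using ⟨hQ, hQ1⟩

lemma IsCPTP.trace_choi {Λ : Matrix (Fin da) (Fin da) ℂ →ₗ[ℂ] Matrix (Fin db) (Fin db) ℂ}
    (hΛ : IsCPTP Λ) : (choi Λ).trace = da := by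
  rw [← trace_ptraceB, hΛ.2, trace_one, Fintype.card_fin]

variable {Φ : Matrix (Fin da) (Fin da) ℂ →ₗ[ℂ] Matrix (Fin db) (Fin db) ℂ}

lemma robustnessDoublePrime_nonneg : 0 ≤ robustnessDoublePrime Φ :=
  Real.sInf_nonneg fun _ hl => hl.1

lemma robustnessDoublePrime_le {l : ℝ} (hl : 0 ≤ l)
    {Λ : Matrix (Fin da) (Fin da) ℂ →ₗ[ℂ] Matrix (Fin db) (Fin db) ℂ} (hΛ : IsCPTP Λ)
    (h : (choi Φ + l • choi Λ).PosSemidef) : robustnessDoublePrime Φ ≤ l :=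
  csInf_le ⟨0, fun _ hl => hl.1⟩ ⟨hl, Λ, hΛ, h⟩

lemma le_robustnessDoublePrime {c l₀ : ℝ} (hl₀ : 0 ≤ l₀)
    {Λ₀ : Matrix (Fin da) (Fin da) ℂ →ₗ[ℂ] Matrix (Fin db) (Fin db) ℂ} (hΛ₀ : IsCPTP Λ₀)
    (h₀ : (choi Φ + l₀ • choi Λ₀).PosSemidef)
    (hc : ∀ (l : ℝ) (Λ : Matrix (Fin da) (Fin da) ℂ →ₗ[ℂ] Matrix (Fin db) (Fin db) ℂ),
      0 ≤ l → IsCPTP Λ → (choi Φ + l • choi Λ).PosSemidef → c ≤ l) :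
    c ≤ robustnessDoublePrime Φ :=
  le_csInf ⟨l₀, hl₀, Λ₀, hΛ₀, h₀⟩ fun _ ⟨hl, Λ, hΛ, h⟩ => hc _ Λ hl hΛ h

/-- For `db = 0` the positivity constraint is void, so `R''` is `sInf` of `[0, ∞)` or of `∅`;
both are `0`, the latter by Mathlib's convention. -/
lemma robustnessDoublePrime_eq_zero_of_isEmpty [IsEmpty (Fin db)] :
    robustnessDoublePrime Φ = 0 := by
  have hvoid (M : Matrix (Fin da × Fin db) (Fin da × Fin db) ℂ) : M.PosSemidef :=
    Subsingleton.elim 0 M ▸ PosSemidef.zero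
  by_cases h : ∃ Λ : Matrix (Fin da) (Fin da) ℂ →ₗ[ℂ] Matrix (Fin db) (Fin db) ℂ, IsCPTP Λ
  · obtain ⟨Λ, hΛ⟩ := h
    exact le_antisymm (robustnessDoublePrime_le le_rfl hΛ (hvoid _)) robustnessDoublePrime_nonneg
  · push Not at h
    simp [robustnessDoublePrime, h]

end Robustness

theorem robustnessDoublePrime_bounds_general {da db : ℕ}
    (Φ : Matrix (Fin da) (Fin da) ℂ →ₗ[ℂ] Matrix (Fin db) (Fin db) ℂ)
    (P N : Matrix (Fin da × Fin db) (Fin da × Fin db) ℂ)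
    (hP : P.PosSemidef) (hN : N.PosSemidef)
    (hdec : choi Φ = P - N) (horth : P * N = 0) :
    (1 / (da : ℝ)) * (N.trace).re ≤ robustnessDoublePrime Φ ∧
    robustnessDoublePrime Φ ≤ (N.trace).re := by
  rcases isEmpty_or_nonempty (Fin db) with hdb | hdb
  · simp [robustnessDoublePrime_eq_zero_of_isEmpty, trace_eq_zero_of_isEmpty]
  obtain ⟨Q, hQ, hQ1, hNQ⟩ := exists_ptraceB_eq_one_le_trace_re_smul hN
  have ht : 0 ≤ N.trace.re := (Complex.nonneg_iff.mp hN.trace_nonneg).1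
  have hfeas : (choi Φ + N.trace.re • choi (mapOfChoi Q)).PosSemidef := by
    rw [hdec, choi_mapOfChoi, sub_add_eq_add_sub, add_sub_assoc]
    exact hP.add hNQ
  have hΛ₀ := isCPTP_mapOfChoi hQ hQ1
  refine ⟨le_robustnessDoublePrime ht hΛ₀ hfeas fun l Λ hl hΛ h => ?_,
    robustnessDoublePrime_le ht hΛ₀ hfeas⟩
  have hbound := trace_re_le_mul_trace_re_of_posSemidef hP.1 hN.1 horth hΛ.1 hl (hdec ▸ h)
  rw [hΛ.trace_choi, Complex.natCast_re] at hbound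
  rw [one_div_mul_eq_div]
  exact div_le_of_le_mul₀ (Nat.cast_nonneg _) hl hbound

/-- `(1/d_A) Tr (J_Φ)₋ ≤ R''(Φ) ≤ Tr (J_Φ)₋`, where
`J_Φ = P - N` is the Jordan decomposition of the Choi matrix. -/
theorem robustnessDoublePrime_bounds {da db : ℕ} (hda : 0 < da)
    (Φ : Matrix (Fin da) (Fin da) ℂ →ₗ[ℂ] Matrix (Fin db) (Fin db) ℂ) (hH : (choi Φ).IsHermitian)
    (P N : Matrix (Fin da × Fin db) (Fin da × Fin db) ℂ)
    (hP : P.PosSemidef) (hN : N.PosSemidef)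
    (hdec : choi Φ = P - N) (horth : P * N = 0) :
    (1 / (da : ℝ)) * (N.trace).re ≤ robustnessDoublePrime Φ ∧
    robustnessDoublePrime Φ ≤ (N.trace).re :=
  robustnessDoublePrime_bounds_general Φ P N hP hN hdec horth
end
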